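/- Let G be a circular-arc graph with no twins and no universal vertices. For a normalized model ψ of G define its straightening φ by letting φ(v) be the oriented chord whose tail and head are, respectively, the initial and final endpoints of the arc ψ(v) (with respect to the positive circular direction along ψ(v)). For a conformal model φ of G_ov define its bending ψ by letting ψ(v) be the closed arc running in the positive circular direction from the tail of φ(v) to the head of φ(v). Then the straightening of every normalized model of G is a conformal model of G_ov, the bending of every conformal model of G_ov is a normalized model of G, and straightening and bending are mutually inverse; hence they establish a one-to-one correspondence between the normalized models of G and the conformal models of G_ov. -/

import Mathlib

namespace CAIso

/-- The circle on which all models live. -/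
abbrev Circle1 : Type := UnitAddCircle

variable {V : Type*}

/-- Closed neighborhood of a vertex. -/
def cnbr (G : SimpleGraph V) (v : V) : Set V := insert v {u | G.Adj v u}

/-- `G` has no twins: distinct vertices have distinct closed neighborhoods. -/
def NoTwins (G : SimpleGraph V) : Prop := ∀ u v : V, u ≠ v → cnbr G u ≠ cnbr G v

/-- `G` has no universal vertices. -/
def NoUniversal (G : SimpleGraph V) : Prop := ∀ v : V, cnbr G v ≠ Set.univ

/-- `v di u` : non-adjacent (distinct) vertices. -/
def Di (G : SimpleGraph V) (v u : V) : Prop := v ≠ u ∧ ¬ G.Adj v u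
/-- `v cs u` : `N[u] ⊊ N[v]`. -/
def Cs (G : SimpleGraph V) (v u : V) : Prop := v ≠ u ∧ cnbr G u ⊂ cnbr G v
/-- `v cd u` : `N[v] ⊊ N[u]`. -/
def Cd (G : SimpleGraph V) (v u : V) : Prop := v ≠ u ∧ cnbr G v ⊂ cnbr G u
/-- `v cc u`. -/
def Cc (G : SimpleGraph V) (v u : V) : Prop :=
  v ≠ u ∧ G.Adj v u ∧ cnbr G v ∪ cnbr G u = Set.univ ∧
  (∀ w ∈ cnbr G v \ cnbr G u, cnbr G w ⊂ cnbr G v) ∧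
  (∀ w ∈ cnbr G u \ cnbr G v, cnbr G w ⊂ cnbr G u)
/-- `v ov u` : the overlap relation `∼` of the overlap graph `G_ov`. -/
def Ov (G : SimpleGraph V) (v u : V) : Prop :=
  v ≠ u ∧ ¬ Di G v u ∧ ¬ Cs G v u ∧ ¬ Cd G v u ∧ ¬ Cc G v u
/-- `v ∥ u` : distinct and not `∼`-adjacent (complement of the overlap graph). -/
def ParR (G : SimpleGraph V) (v u : V) : Prop := v ≠ u ∧ ¬ Ov G v u

/-- `left(v)`. -/
def leftSet (G : SimpleGraph V) (v : V) : Set V := {u | Cs G v u ∨ Cc G v u}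
/-- `right(v)`. -/
def rightSet (G : SimpleGraph V) (v : V) : Set V := {u | Di G v u ∨ Cd G v u}

/-- The labeled endpoint map of a model: `(v, false)` is the first endpoint
(tail of a chord / initial endpoint of an arc, the letter `v⁰`), `(v, true)` the second
(the letter `v¹`). -/
def lep (φ : V → Circle1 × Circle1) (p : V × Bool) : Circle1 :=
  if p.2 then (φ p.1).2 else (φ p.1).1

/-- All endpoints of the objects assigned to vertices of `M` are pairwise distinct. -/
def DistinctEndpointsOn (M : Set V) (φ : V → Circle1 × Circle1) : Prop :=
  Set.InjOn (lep φ) {p : V × Bool | p.1 ∈ M}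

/-- The closed arc running in the positive direction from `c.1` to `c.2`. -/
def arcPts (c : Circle1 × Circle1) : Set Circle1 := {x | btw c.1 x c.2}
/-- The closed arc from `a` to `b` (positive direction). -/
def arcSet (a b : Circle1) : Set Circle1 := {x | btw a x b}
/-- The open arc from `a` to `b` (positive direction). -/
def oarcSet (a b : Circle1) : Set Circle1 := {x | sbtw a x b}

/-- A circular-arc model of `G`. -/
def IsCAModel (G : SimpleGraph V) (ψ : V → Circle1 × Circle1) : Prop :=
  DistinctEndpointsOn Set.univ ψ ∧
  ∀ u v : V, u ≠ v → (G.Adj u v ↔ (arcPts (ψ u) ∩ arcPts (ψ v)).Nonempty)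

/-- `G` is a circular-arc graph. -/
def IsCircularArc (G : SimpleGraph V) : Prop := ∃ ψ, IsCAModel G ψ

/-- Two arcs overlap: they intersect, neither contains the other,
and their union is not the whole circle. -/
def ArcsOverlap (c d : Circle1 × Circle1) : Prop :=
  (arcPts c ∩ arcPts d).Nonempty ∧ ¬ arcPts c ⊆ arcPts d ∧ ¬ arcPts d ⊆ arcPts c ∧
  arcPts c ∪ arcPts d ≠ Set.univ

/-- A normalized circular-arc model of `G`. -/
def IsNormalizedModel (G : SimpleGraph V) (ψ : V → Circle1 × Circle1) : Prop :=
  IsCAModel G ψ ∧ ∀ u v : V, u ≠ v →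
    ((Di G v u ↔ arcPts (ψ v) ∩ arcPts (ψ u) = ∅) ∧
     (Cs G v u ↔ arcPts (ψ u) ⊂ arcPts (ψ v)) ∧
     (Cd G v u ↔ arcPts (ψ v) ⊂ arcPts (ψ u)) ∧
     (Cc G v u ↔ arcPts (ψ v) ∪ arcPts (ψ u) = Set.univ) ∧
     (Ov G v u ↔ ArcsOverlap (ψ v) (ψ u)))

/-- Two chords cross: each open arc determined by `c` contains exactly one endpoint of `d`. -/
def Crosses (c d : Circle1 × Circle1) : Prop :=
  (sbtw c.1 d.1 c.2 ∧ sbtw c.2 d.2 c.1) ∨ (sbtw c.1 d.2 c.2 ∧ sbtw c.2 d.1 c.1)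

/-- A chord model of the relation `r` on the vertex set `M`. -/
def IsChordModelOn (r : V → V → Prop) (M : Set V) (φ : V → Circle1 × Circle1) : Prop :=
  DistinctEndpointsOn M φ ∧ ∀ u ∈ M, ∀ v ∈ M, u ≠ v → (r u v ↔ Crosses (φ u) (φ v))

/-- Chord `d` lies on the left side of the oriented chord `c = (tail, head)`:
both endpoints of `d` lie in the open arc from the tail of `c` to the head of `c`. -/
def OnLeft (c d : Circle1 × Circle1) : Prop := sbtw c.1 d.1 c.2 ∧ sbtw c.1 d.2 c.2
/-- Chord `d` lies on the right side of the oriented chord `c`. -/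
def OnRight (c d : Circle1 × Circle1) : Prop := sbtw c.2 d.1 c.1 ∧ sbtw c.2 d.2 c.1

/-- A conformal (oriented chord) model of `(M, ∼)`, where `∼` is the overlap relation of `G`. -/
def IsConformalOn (G : SimpleGraph V) (M : Set V) (φ : V → Circle1 × Circle1) : Prop :=
  IsChordModelOn (Ov G) M φ ∧
  ∀ v ∈ M, ∀ u ∈ M, u ≠ v →
    ((u ∈ leftSet G v ↔ OnLeft (φ v) (φ u)) ∧ (u ∈ rightSet G v ↔ OnRight (φ v) (φ u)))

/-- `x ∼ M` : `x` is `∼`-adjacent to every vertex of `M`. -/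
def SimAll (G : SimpleGraph V) (x : V) (M : Set V) : Prop := ∀ m ∈ M, Ov G x m
/-- `x ∥ M`. -/
def ParAll (G : SimpleGraph V) (x : V) (M : Set V) : Prop := ∀ m ∈ M, ParR G x m

/-- A module of the overlap graph `G_ov`. -/
def IsModule (G : SimpleGraph V) (M : Set V) : Prop :=
  M.Nonempty ∧ ∀ x ∉ M, SimAll G x M ∨ ParAll G x M

/-- A strong module of `G_ov`. -/
def IsStrongModule (G : SimpleGraph V) (M : Set V) : Prop :=
  IsModule G M ∧ ∀ N, IsModule G N → N ⊆ M ∨ M ⊆ N ∨ Disjoint M N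

/-- A proper module: some outside vertex is `∼`-adjacent to all of `M`. -/
def ProperModule (G : SimpleGraph V) (M : Set V) : Prop := ∃ x ∉ M, SimAll G x M

/-- `N` is a child of `M` in the modular decomposition:
a maximal strong module properly contained in `M`. -/
def IsChildOf (G : SimpleGraph V) (M N : Set V) : Prop :=
  IsStrongModule G N ∧ N ⊂ M ∧ ∀ N', IsStrongModule G N' → N' ⊂ M → N ⊆ N' → N' = N

def NonSingleton (M : Set V) : Prop := ∃ x ∈ M, ∃ y ∈ M, x ≠ y

def ChildrenPairwiseSim (G : SimpleGraph V) (M : Set V) : Prop :=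
  ∀ N₁ N₂, IsChildOf G M N₁ → IsChildOf G M N₂ → N₁ ≠ N₂ → ∀ x ∈ N₁, ∀ y ∈ N₂, Ov G x y
def ChildrenPairwisePar (G : SimpleGraph V) (M : Set V) : Prop :=
  ∀ N₁ N₂, IsChildOf G M N₁ → IsChildOf G M N₂ → N₁ ≠ N₂ → ∀ x ∈ N₁, ∀ y ∈ N₂, ParR G x y

/-- A serial strong module of the modular decomposition of `G_ov`. -/
def SerialM (G : SimpleGraph V) (M : Set V) : Prop :=
  IsStrongModule G M ∧ NonSingleton M ∧ ChildrenPairwiseSim G M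
/-- A parallel strong module. -/
def ParallelM (G : SimpleGraph V) (M : Set V) : Prop :=
  IsStrongModule G M ∧ NonSingleton M ∧ ChildrenPairwisePar G M
/-- A prime strong module (neither serial nor parallel). -/
def PrimeM (G : SimpleGraph V) (M : Set V) : Prop :=
  IsStrongModule G M ∧ NonSingleton M ∧ ¬ ChildrenPairwiseSim G M ∧ ¬ ChildrenPairwisePar G M

/-- The graph induced by the (symmetrized) relation `r` on the set `M` is connected. -/
def ConnOn (r : V → V → Prop) (M : Set V) : Prop :=
  M.Nonempty ∧ ∀ ⦃x⦄, x ∈ M → ∀ ⦃y⦄, y ∈ M →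
    Relation.ReflTransGen (fun a b => a ∈ M ∧ b ∈ M ∧ (r a b ∨ r b a)) x y

/-- `N[M]`, the set of outside vertices `∼`-adjacent to all of `M`. -/
def nbrMod (G : SimpleGraph V) (M : Set V) : Set V := {x | x ∉ M ∧ SimAll G x M}

/-- `C[M]`, the vertex set of the connected component of `G_ov` containing `M`. -/
def compOf (G : SimpleGraph V) (M : Set V) : Set V :=
  {x | ∃ m ∈ M, Relation.ReflTransGen (fun a b => Ov G a b ∨ Ov G b a) x m}

/-- The set of endpoints of the chords/arcs of the vertices in `A`. -/
def eptSet (φ : V → Circle1 × Circle1) (A : Set V) : Set Circle1 :=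
  {x | ∃ p : V × Bool, p.1 ∈ A ∧ lep φ p = x}

/-- The set of circle points realizing a set of labeled letters. -/
def lepIm (φ : V → Circle1 × Circle1) (P : Set (V × Bool)) : Set Circle1 :=
  {x | ∃ p ∈ P, lep φ p = x}

/-- `X` is contiguous in `Y`: `X = Y ∩ A` for a circular arc `A`. -/
def ContiguousIn (X Y : Set Circle1) : Prop := ∃ a b : Circle1, a ≠ b ∧ X = Y ∩ arcSet a b

/-- `X` forms two contiguous blocks in `Y`. -/
def TwoBlocks (Y X : Set Circle1) : Prop :=
  ∃ X₁ X₂ : Set Circle1, X₁.Nonempty ∧ X₂.Nonempty ∧ Disjoint X₁ X₂ ∧ X₁ ∪ X₂ = X ∧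
    ContiguousIn X₁ Y ∧ ContiguousIn X₂ Y

/-- The endpoints of `M` form two contiguous blocks, given by the arcs `(a,b)` and `(a',b')`,
within the endpoints of `Y`, each block containing exactly one endpoint of each chord of `M`. -/
def BlockDecomp (φ : V → Circle1 × Circle1) (Y M : Set V) (a b a' b' : Circle1) : Prop :=
  a ≠ b ∧ a' ≠ b' ∧
  a ∉ eptSet φ Y ∧ b ∉ eptSet φ Y ∧ a' ∉ eptSet φ Y ∧ b' ∉ eptSet φ Y ∧
  Disjoint (eptSet φ Y ∩ arcSet a b) (eptSet φ Y ∩ arcSet a' b') ∧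
  (eptSet φ Y ∩ arcSet a b) ∪ (eptSet φ Y ∩ arcSet a' b') = eptSet φ M ∧
  ∀ v ∈ M, (lep φ (v, false) ∈ arcSet a b ∧ lep φ (v, true) ∈ arcSet a' b') ∨
           (lep φ (v, false) ∈ arcSet a' b' ∧ lep φ (v, true) ∈ arcSet a b)

/-- Reading order along the arc `(a,b)`: some endpoint of `u` inside the arc
precedes some endpoint of `w` inside the arc. -/
def rdOrd (φ : V → Circle1 × Circle1) (a b : Circle1) (u w : V) : Prop :=
  ∃ p q : Bool, lep φ (u, p) ∈ arcSet a b ∧ lep φ (w, q) ∈ arcSet a b ∧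
    lep φ (u, p) ≠ lep φ (w, q) ∧ btw a (lep φ (u, p)) (lep φ (w, q))

/-- The letter of `u` belonging to `P` precedes the letter of `w` belonging to `P`,
reading from the point `a` in the positive direction. -/
def precInSet (φ : V → Circle1 × Circle1) (P : Set (V × Bool)) (a : Circle1) (u w : V) : Prop :=
  ∃ p q : Bool, (u, p) ∈ P ∧ (w, q) ∈ P ∧ lep φ (u, p) ≠ lep φ (w, q) ∧
    btw a (lep φ (u, p)) (lep φ (w, q))

/-- `r` is a strict linear order on the set `M`. -/
def IsLinOrderOn (M : Set V) (r : V → V → Prop) : Prop :=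
  (∀ x ∈ M, ¬ r x x) ∧
  (∀ x ∈ M, ∀ y ∈ M, ∀ z ∈ M, r x y → r y z → r x z) ∧
  (∀ x ∈ M, ∀ y ∈ M, x ≠ y → (r x y ↔ ¬ r y x))

/-- `(r₁, r₂)` is a permutation model of the graph `(M, adj)`. -/
def IsPermModelOn (adj : V → V → Prop) (M : Set V) (r₁ r₂ : V → V → Prop) : Prop :=
  IsLinOrderOn M r₁ ∧ IsLinOrderOn M r₂ ∧
  ∀ x ∈ M, ∀ y ∈ M, x ≠ y → (adj x y ↔ (r₁ x y ↔ r₂ x y))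

/-- `r` is an orientation of the edges `E` restricted to `M`. -/
def IsOrientationOn (E : V → V → Prop) (M : Set V) (r : V → V → Prop) : Prop :=
  (∀ x y, r x y → x ∈ M ∧ y ∈ M ∧ E x y) ∧
  (∀ x ∈ M, ∀ y ∈ M, E x y → (r x y ↔ ¬ r y x))

/-- `r` is a transitive orientation of the edges `E` restricted to `M`. -/
def IsTransOrientOn (E : V → V → Prop) (M : Set V) (r : V → V → Prop) : Prop :=
  IsOrientationOn E M r ∧ ∀ x y z, r x y → r y z → r x z

/-- The cyclic betweenness of three labeled endpoints of a model. -/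
def sb3 (φ : V → Circle1 × Circle1) (p q r : V × Bool) : Prop :=
  sbtw (lep φ p) (lep φ q) (lep φ r)

/-- Equivalence of oriented chord models restricted to `M` (equal circular words
over the labeled letters). -/
def OEquivOn (M : Set V) (φ ψ : V → Circle1 × Circle1) : Prop :=
  ∀ p q r : V × Bool, p.1 ∈ M → q.1 ∈ M → r.1 ∈ M → (sb3 φ p q r ↔ sb3 ψ p q r)

def flipB : V × Bool → V × Bool := fun p => (p.1, !p.2)

/-- `ψ` is (equivalent to) the reflection of `φ` on `M`: the circular word of `ψ`
is the reverse of that of `φ` with `v⁰` and `v¹` exchanged. -/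
def OReflOn (M : Set V) (φ ψ : V → Circle1 × Circle1) : Prop :=
  ∀ p q r : V × Bool, p.1 ∈ M → q.1 ∈ M → r.1 ∈ M →
    (sb3 φ p q r ↔ sb3 ψ (flipB r) (flipB q) (flipB p))

def swapBy (h : V → Bool) : V × Bool → V × Bool := fun p => (p.1, xor p.2 (h p.1))

/-- Equivalence of (non-oriented) chord models: equal circular word representations. -/
def UEquiv (φ ψ : V → Circle1 × Circle1) : Prop :=
  ∃ h : V → Bool, ∀ p q r : V × Bool,
    sb3 φ p q r ↔ sb3 ψ (swapBy h p) (swapBy h q) (swapBy h r)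

/-- `ψ` is equivalent to the reflection of the (non-oriented) chord model `φ`. -/
def UReflEquiv (φ ψ : V → Circle1 × Circle1) : Prop :=
  ∃ h : V → Bool, ∀ p q r : V × Bool,
    sb3 φ p q r ↔ sb3 ψ (swapBy h r) (swapBy h q) (swapBy h p)

/-- The sets `S 0, …, S (n-1)` appear in this circular order around the circle:
there are cut points, in cyclic order, such that `S i` lies in the `i`-th gap. -/
def SetsInCyclicOrder (n : ℕ) (S : ℕ → Set Circle1) : Prop :=
  ∃ r : ℕ → ℝ,
    (∀ i j, i < j → j < n → r i < r j) ∧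
    (∀ i, i < n → ∀ j, j < n → r i < r j + 1) ∧
    ∀ i, i < n → ∀ x ∈ S i, sbtw ((r i : ℝ) : Circle1) x ((r ((i + 1) % n) : ℝ) : Circle1)

/-- A split `(A, α(A), B, α(B))` of the graph `G`. -/
def IsSplit (G : SimpleGraph V) (A aA B aB : Set V) : Prop :=
  A.Nonempty ∧ B.Nonempty ∧
  Disjoint A aA ∧ Disjoint A B ∧ Disjoint A aB ∧
  Disjoint aA B ∧ Disjoint aA aB ∧ Disjoint B aB ∧
  A ∪ aA ∪ B ∪ aB = Set.univ ∧
  (∀ a ∈ A, ∀ b ∈ B, G.Adj a b) ∧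
  (∀ x ∈ aA, ∀ y ∈ B ∪ aB, ¬ G.Adj x y) ∧
  (∀ x ∈ aB, ∀ y ∈ A ∪ aA, ¬ G.Adj x y)

/-- A non-trivial split. -/
def NontrivialSplit (G : SimpleGraph V) (A aA B aB : Set V) : Prop :=
  IsSplit G A aA B aB ∧ 1 < (A ∪ aA).ncard ∧ 1 < (B ∪ aB).ncard

/-- The metaedge `(M⁰, M¹, <_M)` of the module `M` with representant `rep`:
`M⁰, M¹` partition the labeled letters of `M` (one letter of each vertex on each side,
with `rep⁰ ∈ M⁰`), `<_M` is a transitive orientation of `(M, ∥)`, and in every conformal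
model of `G_ov`, for every decomposition of the letters of `M` into two contiguous blocks
among the letters of `C[M]` whose first block contains `rep⁰`, the first block consists
exactly of the letters `M⁰`, the second of `M¹`, and the reading order of the first block
restricted to `∥`-pairs is exactly `<_M`. -/
def IsMetaedge (G : SimpleGraph V) (M : Set V) (rep : V)
    (M0 M1 : Set (V × Bool)) (lt : V → V → Prop) : Prop :=
  M0 ∪ M1 = {p : V × Bool | p.1 ∈ M} ∧ Disjoint M0 M1 ∧
  (∀ v ∈ M, ((v, false) ∈ M0 ↔ (v, true) ∈ M1)) ∧
  (rep, false) ∈ M0 ∧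
  IsTransOrientOn (ParR G) M lt ∧
  ∀ φ : V → Circle1 × Circle1, IsConformalOn G Set.univ φ →
    ∀ a b a' b' : Circle1, BlockDecomp φ (compOf G M) M a b a' b' →
      lep φ (rep, false) ∈ arcSet a b →
      ((∀ p : V × Bool, p.1 ∈ M →
          ((p ∈ M0 ↔ lep φ p ∈ arcSet a b) ∧ (p ∈ M1 ↔ lep φ p ∈ arcSet a' b'))) ∧
       ∀ x ∈ M, ∀ y ∈ M, ParR G x y → (lt x y ↔ precInSet φ M0 a x y))

/-- In the model `φ`, the letters `W0` are placed in the open arc `(c0, d0)`, the letters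
`W1` in the open arc `(c1, d1)`, and the two induced reading orders form an (admissible)
oriented permutation model of `(Wset, ∼)` whose first order agrees with `lt` on `∥`-pairs. -/
def AdmissiblePlacedAt (G : SimpleGraph V) (φ : V → Circle1 × Circle1)
    (Wset : Set V) (W0 W1 : Set (V × Bool)) (lt : V → V → Prop)
    (c0 d0 c1 d1 : Circle1) : Prop :=
  (∀ p ∈ W0, sbtw c0 (lep φ p) d0) ∧
  (∀ p ∈ W1, sbtw c1 (lep φ p) d1) ∧
  (∀ x ∈ Wset, ∀ y ∈ Wset, x ≠ y →
    (Ov G x y ↔ (precInSet φ W0 c0 x y ↔ precInSet φ W1 c1 x y))) ∧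
  (∀ x ∈ Wset, ∀ y ∈ Wset, ParR G x y → (lt x y ↔ precInSet φ W0 c0 x y))

/-- An improper prime strong module: `(M,∼)` and `(M,∥)` are connected
and no outside vertex is `∼`-adjacent to all of `M`. -/
def ImproperPrime (G : SimpleGraph V) (M : Set V) : Prop :=
  IsStrongModule G M ∧ ConnOn (Ov G) M ∧ ConnOn (ParR G) M ∧ ¬ ProperModule G M

/-- `U` is a transversal of `M`: it contains exactly one vertex of each child of `M`. -/
def IsTransversal (G : SimpleGraph V) (M U : Set V) : Prop :=
  U ⊆ M ∧ (∀ N, IsChildOf G M N → ∃! u, u ∈ U ∩ N) ∧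
  ∀ u ∈ U, ∃ N, IsChildOf G M N ∧ u ∈ N

/-- A probe `(y, x, X, α(X))` in the graph `(Uset, ∼)`. -/
def IsProbe (G : SimpleGraph V) (Uset : Set V) (y x : V) (X aX : Set V) : Prop :=
  x ≠ y ∧ X.Nonempty ∧ aX.Nonempty ∧
  Disjoint ({x, y} : Set V) X ∧ Disjoint ({x, y} : Set V) aX ∧ Disjoint X aX ∧
  ({x, y} ∪ X ∪ aX) ⊂ Uset ∧
  Ov G y x ∧ (∀ z ∈ X ∪ aX, ParR G y z) ∧ (∀ z ∈ X, Ov G x z) ∧ (∀ z ∈ aX, ParR G x z) ∧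
  ConnOn (Ov G) ({x, y} ∪ X ∪ aX) ∧
  ∀ z ∈ Uset \ ({x, y} ∪ X ∪ aX),
    (∀ w ∈ X ∪ aX, ParR G z w) ∨ ((∀ w ∈ X, Ov G z w) ∧ ∀ w ∈ aX, ParR G z w) ∨
    (∀ w ∈ X ∪ aX, Ov G z w)

/-- The `K`-relation on a child `Mi` of an improper prime module, relative to the
transversal `U`; its equivalence classes are the consistent submodules. -/
def KrelOn (G : SimpleGraph V) (U Mi : Set V) (v v' : V) : Prop :=
  v ∈ Mi ∧ v' ∈ Mi ∧
  (v = v' ∨ PrimeM G Mi ∨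
   (ParallelM G Mi ∧ ∀ u ∈ U \ Mi,
      (v ∈ leftSet G u ∧ v' ∈ leftSet G u) ∨ (v ∈ rightSet G u ∧ v' ∈ rightSet G u)) ∨
   (SerialM G Mi ∧
      ({leftSet G v ∩ (U \ Mi), rightSet G v ∩ (U \ Mi)} : Set (Set V)) =
       {leftSet G v' ∩ (U \ Mi), rightSet G v' ∩ (U \ Mi)}))

/-- `M` is the vertex set of a connected component of `G_ov`. -/
def IsCompOf (G : SimpleGraph V) (M : Set V) : Prop :=
  ∃ v, M = {u | Relation.ReflTransGen (fun a b => Ov G a b ∨ Ov G b a) v u}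

/-- `v` separates the modules `M₁` and `M₂`. -/
def Separates (G : SimpleGraph V) (v : V) (M₁ M₂ : Set V) : Prop :=
  v ∉ M₁ ∪ M₂ ∧
  ((M₁ ⊆ leftSet G v ∧ M₂ ⊆ rightSet G v) ∨ (M₂ ⊆ leftSet G v ∧ M₁ ⊆ rightSet G v))

def NonSep (G : SimpleGraph V) (M₁ M₂ : Set V) : Prop := ¬ ∃ v, Separates G v M₁ M₂

/-- A node: a maximal set of pairwise non-separated components of `G_ov`. -/
def IsNode (G : SimpleGraph V) (N : Set (Set V)) : Prop :=
  (∀ M ∈ N, IsCompOf G M) ∧ (∀ M₁ ∈ N, ∀ M₂ ∈ N, NonSep G M₁ M₂) ∧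
  (∀ M', IsCompOf G M' → (∀ M ∈ N, NonSep G M' M) → M' ∈ N)

/-- The vertex set of the bipartite graph `T_NM` : modules (components of `G_ov`) on the
left, nodes on the right. -/
def TVert (G : SimpleGraph V) : Type _ :=
  {M : Set V // IsCompOf G M} ⊕ {N : Set (Set V) // IsNode G N}

/-- The bipartite graph `T_NM`. -/
def TNM (G : SimpleGraph V) : SimpleGraph (TVert G) where
  Adj x y :=
    match x, y with
    | Sum.inl M, Sum.inr N => M.1 ∈ N.1
    | Sum.inr N, Sum.inl M => M.1 ∈ N.1
    | _, _ => False
  symm := ⟨by rintro (M | N) (M' | N') h <;> exact h⟩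
  loopless := ⟨by rintro (M | N) h <;> exact h⟩

/-- The set of vertices of `G` contained in the modules lying in the connected component
of `T_NM − x₀` containing `y`. -/
def VTavoid (G : SimpleGraph V) (x₀ y : TVert G) : Set V :=
  {u | ∃ M : {M : Set V // IsCompOf G M},
    Relation.ReflTransGen (fun a c => (TNM G).Adj a c ∧ a ≠ x₀ ∧ c ≠ x₀) y (Sum.inl M) ∧
    u ∈ M.1}

/-- Straightening: the oriented chord of `v` has as tail and head, respectively, the
initial and final endpoints of the arc of `v` (w.r.t. the positive direction). -/
def straighten {V : Type*} (ψ : V → Circle1 × Circle1) : V → Circle1 × Circle1 :=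
  fun v => ((ψ v).1, (ψ v).2)

/-- Bending: the arc of `v` runs in the positive direction from the tail to the head
of the oriented chord of `v`. -/
def bend {V : Type*} (φ : V → Circle1 × Circle1) : V → Circle1 × Circle1 :=
  fun v => ((φ v).1, (φ v).2)

/-!
Straightening and bending keep the pair of endpoints of every vertex, so both are the identity
on `V → Circle1 × Circle1`; the content is that the two notions of model coincide. For two arcs
with four distinct endpoints, the relation between the arcs (containment either way, disjointness,
covering the circle, overlap) is read off from the oriented chords: on which side of the other
each chord lies, or whether they cross. On the graph side, in the absence of universal vertices,
each of `di`, `cs`, `cd`, `cc` is determined by which of `left`/`right` the two vertices lie in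
with respect to each other. The circle facts are checked by cutting the circle open at one
endpoint, which turns every cyclic-order statement into linear arithmetic on `[0, 1)`.
-/

lemma nodup_four_iff {α : Type*} {a b c d : α} :
    [a, b, c, d].Nodup ↔ a ≠ b ∧ a ≠ c ∧ a ≠ d ∧ b ≠ c ∧ b ≠ d ∧ c ≠ d := by
  simp [and_assoc]

section Position

/-- The coordinate of `x` on the circle cut open at `a`. -/
noncomputable def posFrom (a x : Circle1) : ℝ := AddCircle.equivIco 1 0 (x - a)

lemma posFrom_mem_Ico (a x : Circle1) : posFrom a x ∈ Set.Ico (0 : ℝ) 1 := by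
  simpa [posFrom] using (AddCircle.equivIco 1 0 (x - a)).2

lemma coe_posFrom (a x : Circle1) : (posFrom a x : Circle1) = x - a :=
  AddCircle.coe_equivIco

lemma posFrom_add_coe (a : Circle1) {ξ : ℝ} (hξ : ξ ∈ Set.Ico (0 : ℝ) 1) :
    posFrom a (a + ξ) = ξ := by
  rw [posFrom, add_sub_cancel_left, AddCircle.equivIco_coe_of_mem (by simpa using hξ)]

lemma posFrom_self (a : Circle1) : posFrom a a = 0 := by
  simpa using posFrom_add_coe a (ξ := 0) (by simp)

lemma posFrom_injective (a : Circle1) : Function.Injective (posFrom a) := fun x y h => by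
  simpa [coe_posFrom] using congrArg ((↑) : ℝ → Circle1) h

lemma posFrom_pos {a x : Circle1} (h : x ≠ a) : 0 < posFrom a x :=
  (posFrom_mem_Ico a x).1.lt_of_ne' fun h0 =>
    h (posFrom_injective a (h0.trans (posFrom_self a).symm))

lemma posFrom_bounds_of_nodup {a x y z : Circle1} (h : [a, x, y, z].Nodup) :
    0 < posFrom a x ∧ 0 < posFrom a y ∧ 0 < posFrom a z ∧
    posFrom a x < 1 ∧ posFrom a y < 1 ∧ posFrom a z < 1 ∧
    posFrom a x ≠ posFrom a y ∧ posFrom a x ≠ posFrom a z ∧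
    posFrom a y ≠ posFrom a z := by
  obtain ⟨hx, hy, hz, hxy, hxz, hyz⟩ := nodup_four_iff.1 h
  have hlt := fun w => (posFrom_mem_Ico a w).2
  have hne := fun {w w'} => (posFrom_injective a).ne (a₁ := w) (a₂ := w')
  exact ⟨posFrom_pos (Ne.symm hx), posFrom_pos (Ne.symm hy), posFrom_pos (Ne.symm hz),
    hlt x, hlt y, hlt z, hne hxy, hne hxz, hne hyz⟩

lemma toIcoMod_one_of_mem {u v : ℝ} (hu : u ∈ Set.Ico (0 : ℝ) 1)
    (hv : v ∈ Set.Ico (0 : ℝ) 1) :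
    toIcoMod one_pos u v = if u ≤ v then v else v + 1 := by
  split_ifs with h
  · exact (toIcoMod_eq_self one_pos).2 ⟨h, by linarith [hu.1, hv.2]⟩
  · rw [toIcoMod_eq_iff]
    exact ⟨⟨by linarith [hu.2, hv.1], by linarith [not_le.mp h]⟩, -1, by simp⟩

lemma toIocMod_one_of_mem {u v : ℝ} (hu : u ∈ Set.Ico (0 : ℝ) 1)
    (hv : v ∈ Set.Ico (0 : ℝ) 1) :
    toIocMod one_pos u v = if u < v then v else v + 1 := by
  split_ifs with h
  · exact (toIocMod_eq_self one_pos).2 ⟨h, by linarith [hu.1, hv.2]⟩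
  · rw [toIocMod_eq_iff]
    exact ⟨⟨by linarith [hu.2, hv.1], by linarith [not_lt.mp h]⟩, -1, by simp⟩

lemma btw_add_left_iff (a x y z : Circle1) : btw (a + x) (a + y) (a + z) ↔ btw x y z := by
  show _ ≤ _ ↔ _ ≤ _
  simp only [add_sub_add_left_eq_sub]

-- On `ℝ`, `btw` and `sbtw` now refer to the cyclic order of the line.
attribute [local instance] LinearOrder.toCircularOrder

lemma btw_coe_iff_of_mem {u v w : ℝ} (hu : u ∈ Set.Ico (0 : ℝ) 1)
    (hv : v ∈ Set.Ico (0 : ℝ) 1) (hw : w ∈ Set.Ico (0 : ℝ) 1) :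
    btw (u : Circle1) v w ↔ btw u v w := by
  rw [QuotientAddGroup.btw_coe_iff]
  show toIcoMod one_pos u v ≤ toIocMod one_pos u w ↔ _
  rw [toIcoMod_one_of_mem hu hv, toIocMod_one_of_mem hu hw, btw_iff]
  rw [Set.mem_Ico] at hu hv hw
  split_ifs <;> grind

lemma btw_iff_btw_posFrom (a : Circle1) {x y z : Circle1} :
    btw x y z ↔ btw (posFrom a x) (posFrom a y) (posFrom a z) :=
  calc btw x y z ↔ btw (a + ↑(posFrom a x)) (a + ↑(posFrom a y)) (a + ↑(posFrom a z)) := by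
        simp only [coe_posFrom, add_sub_cancel]
    _ ↔ _ := btw_add_left_iff ..
    _ ↔ _ := btw_coe_iff_of_mem (posFrom_mem_Ico ..) (posFrom_mem_Ico ..) (posFrom_mem_Ico ..)

lemma sbtw_iff_sbtw_posFrom (a : Circle1) {x y z : Circle1} :
    sbtw x y z ↔ sbtw (posFrom a x) (posFrom a y) (posFrom a z) := by
  simp only [sbtw_iff_btw_not_btw, btw_iff_btw_posFrom a]

lemma mem_arcPts_iff_posFrom (a : Circle1) {c : Circle1 × Circle1} {x : Circle1} :
    x ∈ arcPts c ↔ btw (posFrom a c.1) (posFrom a x) (posFrom a c.2) :=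
  btw_iff_btw_posFrom a

lemma exists_sbtw {p q : Circle1} (h : p ≠ q) : ∃ x, sbtw p x q := by
  have hq := posFrom_pos h.symm
  have hmem : posFrom p q / 2 ∈ Set.Ico (0 : ℝ) 1 :=
    ⟨by positivity, by linarith [(posFrom_mem_Ico p q).2]⟩
  refine ⟨p + ↑(posFrom p q / 2), ?_⟩
  rw [sbtw_iff_sbtw_posFrom p, posFrom_add_coe p hmem, posFrom_self, sbtw_iff]
  exact Or.inl ⟨by positivity, by linarith⟩

end Position

section ArcsAndChords

attribute [local instance] LinearOrder.toCircularOrder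

variable {c d : Circle1 × Circle1}

lemma left_mem_arcPts (c : Circle1 × Circle1) : c.1 ∈ arcPts c :=
  show btw c.1 c.1 c.2 from btw_rfl_left

lemma right_mem_arcPts (c : Circle1 × Circle1) : c.2 ∈ arcPts c :=
  show btw c.1 c.2 c.2 from btw_rfl_right

lemma arcPts_ne_univ (h : c.1 ≠ c.2) : arcPts c ≠ Set.univ := fun hc => by
  obtain ⟨x, hx⟩ := exists_sbtw h.symm
  exact hx.not_btw (show x ∈ arcPts c from hc ▸ Set.mem_univ x)

lemma nodup_swap (hcd : [c.1, c.2, d.1, d.2].Nodup) : [d.1, d.2, c.1, c.2].Nodup :=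
  (List.perm_append_comm (l₁ := [c.1, c.2]) (l₂ := [d.1, d.2])).nodup_iff.1 hcd

lemma chord_cases (hcd : [c.1, c.2, d.1, d.2].Nodup) :
    (OnLeft c d ∧ OnRight d c) ∨ (OnRight c d ∧ OnLeft d c) ∨
      (OnRight c d ∧ OnRight d c) ∨ (OnLeft c d ∧ OnLeft d c) ∨ Crosses c d := by
  have hpos := posFrom_bounds_of_nodup hcd
  simp only [OnLeft, OnRight, Crosses, sbtw_iff_sbtw_posFrom c.1, posFrom_self, sbtw_iff]
  grind

lemma onLeft_or_onRight_of_onLeft_or_onRight (hcd : [c.1, c.2, d.1, d.2].Nodup)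
    (h : OnLeft c d ∨ OnRight c d) : OnLeft d c ∨ OnRight d c := by
  have hpos := posFrom_bounds_of_nodup hcd
  simp only [OnLeft, OnRight, sbtw_iff_sbtw_posFrom c.1, posFrom_self, sbtw_iff] at h ⊢
  grind

lemma arcPts_ssubset_of_onLeft_of_onRight (hcd : [c.1, c.2, d.1, d.2].Nodup)
    (hl : OnLeft c d) (hr : OnRight d c) : arcPts d ⊂ arcPts c := by
  have hpos := posFrom_bounds_of_nodup hcd
  simp only [OnLeft, OnRight, sbtw_iff_sbtw_posFrom c.1, posFrom_self, sbtw_iff] at hl hr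
  refine ssubset_of_subset_not_subset (fun x hx => ?_) fun hsub => ?_
  · have hx0 := posFrom_mem_Ico c.1 x
    simp only [mem_arcPts_iff_posFrom c.1, btw_iff, posFrom_self, Set.mem_Ico] at hx hx0 ⊢
    grind
  · have hc1 := hsub (left_mem_arcPts c)
    simp only [mem_arcPts_iff_posFrom c.1, btw_iff, posFrom_self] at hc1
    grind

lemma arcPts_inter_eq_empty_of_onRight_of_onRight (hcd : [c.1, c.2, d.1, d.2].Nodup)
    (hc : OnRight c d) (hd : OnRight d c) :
    arcPts c ∩ arcPts d = ∅ ∧ arcPts c ∪ arcPts d ≠ Set.univ := by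
  have hpos := posFrom_bounds_of_nodup hcd
  simp only [OnRight, sbtw_iff_sbtw_posFrom c.1, posFrom_self, sbtw_iff] at hc hd
  refine ⟨Set.eq_empty_of_forall_notMem fun x hx => ?_, fun hU => ?_⟩
  · have hx0 := posFrom_mem_Ico c.1 x
    simp only [Set.mem_inter_iff, mem_arcPts_iff_posFrom c.1, btw_iff, posFrom_self,
      Set.mem_Ico] at hx hx0
    grind
  · obtain ⟨-, -, -, h23, -, -⟩ := nodup_four_iff.1 hcd
    obtain ⟨x, hx⟩ := exists_sbtw h23
    have hxU := hU.symm ▸ Set.mem_univ x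
    have hx0 := posFrom_mem_Ico c.1 x
    simp only [Set.mem_union, mem_arcPts_iff_posFrom c.1, btw_iff, sbtw_iff_sbtw_posFrom c.1,
      sbtw_iff, posFrom_self, Set.mem_Ico] at hx hxU hx0
    grind

lemma arcPts_union_eq_univ_of_onLeft_of_onLeft (hcd : [c.1, c.2, d.1, d.2].Nodup)
    (hc : OnLeft c d) (hd : OnLeft d c) : arcPts c ∪ arcPts d = Set.univ := by
  have hpos := posFrom_bounds_of_nodup hcd
  simp only [OnLeft, sbtw_iff_sbtw_posFrom c.1, posFrom_self, sbtw_iff] at hc hd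
  refine Set.eq_univ_of_forall fun x => ?_
  have hx0 := posFrom_mem_Ico c.1 x
  simp only [Set.mem_union, mem_arcPts_iff_posFrom c.1, btw_iff, posFrom_self,
    Set.mem_Ico] at hx0 ⊢
  grind

lemma arcsOverlap_of_crosses (hcd : [c.1, c.2, d.1, d.2].Nodup) (h : Crosses c d) :
    ArcsOverlap c d := by
  have hpos := posFrom_bounds_of_nodup hcd
  obtain ⟨-, -, h14, h23, -, -⟩ := nodup_four_iff.1 hcd
  -- whichever way the chords cross, one of `x`, `y` lies outside both arcs
  obtain ⟨x, hx⟩ := exists_sbtw h23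
  obtain ⟨y, hy⟩ := exists_sbtw h14.symm
  simp only [Crosses, sbtw_iff_sbtw_posFrom c.1, posFrom_self, sbtw_iff] at h hx hy
  refine ⟨Set.nonempty_iff_ne_empty.2 fun hE => ?_, fun hsub => ?_, fun hsub => ?_,
    fun hU => ?_⟩
  · have h1 : d.1 ∉ arcPts c := fun h1 => hE.subset ⟨h1, left_mem_arcPts d⟩
    have h2 : d.2 ∉ arcPts c := fun h2 => hE.subset ⟨h2, right_mem_arcPts d⟩
    simp only [mem_arcPts_iff_posFrom c.1, btw_iff, posFrom_self] at h1 h2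
    grind
  · have h1 := hsub (left_mem_arcPts c)
    have h2 := hsub (right_mem_arcPts c)
    simp only [mem_arcPts_iff_posFrom c.1, btw_iff, posFrom_self] at h1 h2
    grind
  · have h1 := hsub (left_mem_arcPts d)
    have h2 := hsub (right_mem_arcPts d)
    simp only [mem_arcPts_iff_posFrom c.1, btw_iff, posFrom_self] at h1 h2
    grind
  · have hxU := hU.symm ▸ Set.mem_univ x
    have hyU := hU.symm ▸ Set.mem_univ y
    have hx0 := posFrom_mem_Ico c.1 x
    have hy0 := posFrom_mem_Ico c.1 y
    simp only [Set.mem_union, mem_arcPts_iff_posFrom c.1, btw_iff, posFrom_self,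
      Set.mem_Ico] at hxU hyU hx0 hy0
    grind

lemma arcPts_ssubset_iff (hcd : [c.1, c.2, d.1, d.2].Nodup) :
    arcPts d ⊂ arcPts c ↔ OnLeft c d ∧ OnRight d c := by
  refine ⟨fun hdc => ?_, fun h => arcPts_ssubset_of_onLeft_of_onRight hcd h.1 h.2⟩
  rcases chord_cases hcd with h | h | h | h | h
  · exact h
  · exact absurd (arcPts_ssubset_of_onLeft_of_onRight (nodup_swap hcd) h.2 h.1) hdc.asymm
  · have hE := (arcPts_inter_eq_empty_of_onRight_of_onRight hcd h.1 h.2).1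
    exact absurd hE (Set.nonempty_iff_ne_empty.1
      ⟨d.1, hdc.subset (left_mem_arcPts d), left_mem_arcPts d⟩)
  · have hU := arcPts_union_eq_univ_of_onLeft_of_onLeft hcd h.1 h.2
    exact absurd ((Set.union_eq_left.2 hdc.subset).symm.trans hU)
      (arcPts_ne_univ (nodup_four_iff.1 hcd).1)
  · exact absurd hdc.subset (arcsOverlap_of_crosses hcd h).2.2.1

lemma arcPts_inter_eq_empty_iff (hcd : [c.1, c.2, d.1, d.2].Nodup) :
    arcPts c ∩ arcPts d = ∅ ↔ OnRight c d ∧ OnRight d c := by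
  refine ⟨fun hE => ?_, fun h => (arcPts_inter_eq_empty_of_onRight_of_onRight hcd h.1 h.2).1⟩
  have hd : d.1 ∉ arcPts c := fun h1 => hE.subset ⟨h1, left_mem_arcPts d⟩
  rcases chord_cases hcd with h | h | h | h | h
  · exact absurd (arcPts_ssubset_of_onLeft_of_onRight hcd h.1 h.2).subset
      fun hsub => hd (hsub (left_mem_arcPts d))
  · have hsub := (arcPts_ssubset_of_onLeft_of_onRight (nodup_swap hcd) h.2 h.1).subset
    exact absurd hE (Set.nonempty_iff_ne_empty.1
      ⟨c.1, left_mem_arcPts c, hsub (left_mem_arcPts c)⟩)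
  · exact h
  · exact absurd h.1.1.btw hd
  · exact absurd hE (Set.nonempty_iff_ne_empty.1 (arcsOverlap_of_crosses hcd h).1)

lemma arcPts_union_eq_univ_iff (hcd : [c.1, c.2, d.1, d.2].Nodup) :
    arcPts c ∪ arcPts d = Set.univ ↔ OnLeft c d ∧ OnLeft d c := by
  refine ⟨fun hU => ?_, fun h => arcPts_union_eq_univ_of_onLeft_of_onLeft hcd h.1 h.2⟩
  obtain ⟨h12, -, -, -, -, h34⟩ := nodup_four_iff.1 hcd
  rcases chord_cases hcd with h | h | h | h | h
  · have hdc := (arcPts_ssubset_of_onLeft_of_onRight hcd h.1 h.2).subset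
    exact absurd ((Set.union_eq_left.2 hdc).symm.trans hU) (arcPts_ne_univ h12)
  · have hsub := (arcPts_ssubset_of_onLeft_of_onRight (nodup_swap hcd) h.2 h.1).subset
    exact absurd ((Set.union_eq_right.2 hsub).symm.trans hU) (arcPts_ne_univ h34)
  · exact absurd hU (arcPts_inter_eq_empty_of_onRight_of_onRight hcd h.1 h.2).2
  · exact h
  · exact absurd hU (arcsOverlap_of_crosses hcd h).2.2.2

lemma arcsOverlap_iff_crosses (hcd : [c.1, c.2, d.1, d.2].Nodup) :
    ArcsOverlap c d ↔ Crosses c d := by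
  refine ⟨fun ⟨hI, hnc, hnd, hU⟩ => ?_, arcsOverlap_of_crosses hcd⟩
  rcases chord_cases hcd with h | h | h | h | h
  · exact absurd (arcPts_ssubset_of_onLeft_of_onRight hcd h.1 h.2).subset hnd
  · exact absurd (arcPts_ssubset_of_onLeft_of_onRight (nodup_swap hcd) h.2 h.1).subset hnc
  · exact absurd (arcPts_inter_eq_empty_of_onRight_of_onRight hcd h.1 h.2).1
      (Set.nonempty_iff_ne_empty.1 hI)
  · exact absurd (arcPts_union_eq_univ_of_onLeft_of_onLeft hcd h.1 h.2) hU
  · exact h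

end ArcsAndChords

section Relations

variable {G : SimpleGraph V} {u v : V}

lemma self_mem_cnbr (v : V) : v ∈ cnbr G v := Set.mem_insert v _

lemma Di.symm (h : Di G v u) : Di G u v := ⟨h.1.symm, fun ha => h.2 ha.symm⟩

lemma Cc.symm (h : Cc G v u) : Cc G u v :=
  ⟨h.1.symm, h.2.1.symm, Set.union_comm (cnbr G v) _ ▸ h.2.2.1, h.2.2.2.2, h.2.2.2.1⟩

lemma cs_iff_cd : Cs G v u ↔ Cd G u v :=
  ⟨fun h => ⟨h.1.symm, h.2⟩, fun h => ⟨h.1.symm, h.2⟩⟩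

lemma Cd.not_di (h : Cd G v u) : ¬ Di G u v := fun hd => by
  rcases h.2.subset (self_mem_cnbr v) with hvu | hadj
  · exact hd.1 hvu.symm
  · exact hd.2 hadj

lemma Cd.not_cd (h : Cd G v u) : ¬ Cd G u v := fun h' => h.2.asymm h'.2

lemma Cc.not_di (h : Cc G v u) : ¬ Di G u v := fun hd => hd.2 h.2.1.symm

lemma Cc.not_cd (hun : NoUniversal G) (h : Cc G v u) : ¬ Cd G u v := fun h' =>
  hun v ((Set.union_eq_left.2 h'.2.subset).symm.trans h.2.2.1)

lemma di_iff_mem_rightSet : Di G v u ↔ u ∈ rightSet G v ∧ v ∈ rightSet G u := by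
  refine ⟨fun h => ⟨Or.inl h, Or.inl h.symm⟩, fun ⟨hu, hv⟩ => ?_⟩
  rcases hu with hu | hu
  · exact hu
  rcases hv with hv | hv
  exacts [absurd hv hu.not_di, absurd hv hu.not_cd]

lemma cs_iff_mem_leftSet_rightSet (hun : NoUniversal G) :
    Cs G v u ↔ u ∈ leftSet G v ∧ v ∈ rightSet G u := by
  refine ⟨fun h => ⟨Or.inl h, Or.inr (cs_iff_cd.1 h)⟩, fun ⟨hu, hv⟩ => ?_⟩
  rcases hu with hu | hu
  · exact hu
  rcases hv with hv | hv
  exacts [absurd hv hu.not_di, absurd hv (hu.not_cd hun)]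

lemma cd_iff_mem_rightSet_leftSet (hun : NoUniversal G) :
    Cd G v u ↔ u ∈ rightSet G v ∧ v ∈ leftSet G u := by
  rw [← cs_iff_cd, cs_iff_mem_leftSet_rightSet hun, and_comm]

lemma cc_iff_mem_leftSet (hun : NoUniversal G) :
    Cc G v u ↔ u ∈ leftSet G v ∧ v ∈ leftSet G u := by
  refine ⟨fun h => ⟨Or.inr h, Or.inr h.symm⟩, fun ⟨hu, hv⟩ => ?_⟩
  rcases hu with hu | hu
  · rcases hv with hv | hv
    exacts [absurd (cs_iff_cd.1 hv) (cs_iff_cd.1 hu).not_cd,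
      absurd (cs_iff_cd.1 hu) (hv.symm.not_cd hun)]
  · exact hu

end Relations

section Models

variable {G : SimpleGraph V}

lemma nodup_of_distinctEndpointsOn {ψ : V → Circle1 × Circle1}
    (h : DistinctEndpointsOn Set.univ ψ) {v u : V} (hvu : v ≠ u) :
    [(ψ v).1, (ψ v).2, (ψ u).1, (ψ u).2].Nodup := by
  have hne : ∀ p q : V × Bool, p ≠ q → lep ψ p ≠ lep ψ q := fun p q =>
    (h.ne_iff (Set.mem_univ p) (Set.mem_univ q)).2
  exact nodup_four_iff.2 ⟨hne (v, false) (v, true) (by simp),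
    hne (v, false) (u, false) (by simp [hvu]), hne (v, false) (u, true) (by simp [hvu]),
    hne (v, true) (u, false) (by simp [hvu]), hne (v, true) (u, true) (by simp [hvu]),
    hne (u, false) (u, true) (by simp)⟩

lemma isNormalizedModel_of_isConformalOn (hun : NoUniversal G) {φ : V → Circle1 × Circle1}
    (h : IsConformalOn G Set.univ φ) : IsNormalizedModel G φ := by
  obtain ⟨⟨hD, hcross⟩, hside⟩ := h
  have hrel : ∀ u v : V, u ≠ v →
      ((Di G v u ↔ arcPts (φ v) ∩ arcPts (φ u) = ∅) ∧
       (Cs G v u ↔ arcPts (φ u) ⊂ arcPts (φ v)) ∧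
       (Cd G v u ↔ arcPts (φ v) ⊂ arcPts (φ u)) ∧
       (Cc G v u ↔ arcPts (φ v) ∪ arcPts (φ u) = Set.univ) ∧
       (Ov G v u ↔ ArcsOverlap (φ v) (φ u))) := by
    intro u v huv
    have hends := nodup_of_distinctEndpointsOn hD huv.symm
    obtain ⟨hlv, hrv⟩ := hside v trivial u trivial huv
    obtain ⟨hlu, hru⟩ := hside u trivial v trivial huv.symm
    refine ⟨?_, ?_, ?_, ?_, ?_⟩
    · rw [di_iff_mem_rightSet, hrv, hru, arcPts_inter_eq_empty_iff hends]
    · rw [cs_iff_mem_leftSet_rightSet hun, hlv, hru, arcPts_ssubset_iff hends]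
    · rw [cd_iff_mem_rightSet_leftSet hun, hrv, hlu, arcPts_ssubset_iff (nodup_swap hends),
        and_comm]
    · rw [cc_iff_mem_leftSet hun, hlv, hlu, arcPts_union_eq_univ_iff hends]
    · rw [hcross v trivial u trivial huv.symm, arcsOverlap_iff_crosses hends]
  refine ⟨⟨hD, fun u v huv => ?_⟩, hrel⟩
  rw [Set.nonempty_iff_ne_empty, ne_eq, ← (hrel v u huv.symm).1, Di]
  simp [huv]

lemma isConformalOn_of_isNormalizedModel {ψ : V → Circle1 × Circle1}
    (h : IsNormalizedModel G ψ) : IsConformalOn G Set.univ ψ := by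
  obtain ⟨⟨hD, -⟩, hrel⟩ := h
  refine ⟨⟨hD, fun u _ v _ huv => ?_⟩, fun v _ u _ huv => ?_⟩
  · rw [(hrel v u huv.symm).2.2.2.2,
      arcsOverlap_iff_crosses (nodup_of_distinctEndpointsOn hD huv)]
  have hends := nodup_of_distinctEndpointsOn hD huv.symm
  obtain ⟨hdi, hcs, hcdv, hcc, -⟩ := hrel u v huv
  have hside := onLeft_or_onRight_of_onLeft_or_onRight hends
  constructor
  · rw [leftSet, Set.mem_ofPred_eq, hcs, hcc, arcPts_ssubset_iff hends,
      arcPts_union_eq_univ_iff hends, ← and_or_left,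
      and_iff_left_of_imp fun h => (hside (Or.inl h)).symm]
  · rw [rightSet, Set.mem_ofPred_eq, hdi, hcdv, arcPts_inter_eq_empty_iff hends,
      arcPts_ssubset_iff (nodup_swap hends), and_comm (a := OnLeft _ _), ← and_or_left,
      and_iff_left_of_imp fun h => (hside (Or.inr h)).symm]

end Models

theorem stmt3_general {V : Type*} (G : SimpleGraph V) (hun : NoUniversal G) :
    (∀ ψ : V → Circle1 × Circle1, IsNormalizedModel G ψ →
        IsConformalOn G Set.univ (straighten ψ)) ∧
    (∀ φ : V → Circle1 × Circle1, IsConformalOn G Set.univ φ →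
        IsNormalizedModel G (bend φ)) ∧
    (∀ ψ : V → Circle1 × Circle1, IsNormalizedModel G ψ → bend (straighten ψ) = ψ) ∧
    (∀ φ : V → Circle1 × Circle1, IsConformalOn G Set.univ φ →
        straighten (bend φ) = φ) :=
  ⟨fun _ h => isConformalOn_of_isNormalizedModel h,
    fun _ h => isNormalizedModel_of_isConformalOn hun h, fun _ _ => rfl, fun _ _ => rfl⟩

/-- For a circular-arc graph `G` with no twins and no universal vertices,
straightening maps normalized models of `G` to conformal models of `G_ov`, bending maps
conformal models of `G_ov` to normalized models of `G`, and the two operations are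
mutually inverse; hence they give a one-to-one correspondence between normalized models
of `G` and conformal models of `G_ov`. -/
theorem stmt3 {V : Type*} [Fintype V] (G : SimpleGraph V)
    (hca : IsCircularArc G) (htw : NoTwins G) (hun : NoUniversal G) :
    (∀ ψ : V → Circle1 × Circle1, IsNormalizedModel G ψ →
        IsConformalOn G Set.univ (straighten ψ)) ∧
    (∀ φ : V → Circle1 × Circle1, IsConformalOn G Set.univ φ →
        IsNormalizedModel G (bend φ)) ∧
    (∀ ψ : V → Circle1 × Circle1, IsNormalizedModel G ψ → bend (straighten ψ) = ψ) ∧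
    (∀ φ : V → Circle1 × Circle1, IsConformalOn G Set.univ φ →
        straighten (bend φ) = φ) :=
  stmt3_general G hun

end CAIso
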